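/- Define W(x) := ((n−2)·A x·B x + 2·A' x·(C₂ x − n·C₁ x))/((n−2)·(A x)²) + ((n²−5)·(C₂ x)² − 4·(C₁ x)² + 2·(4 + n − n²)·C₁ x·C₂ x)/((n−2)·(n−1)·(A x)²), and let W̄ be given by the same formula with (A, B, C₁, C₂) replaced by the transformed coefficients (Ā, B̄, C̄₁, C̄₂) and A' replaced by the derivative of Ā. If A(x) ≠ 0 for all x, then for every transformation datum one has W̄(f x)·(f' x)² = W(x) for all x ∈ ℝ. Consequently the quantity under the square root in the integral invariant I_E^n = ∫√(±W) dΦ transforms as a density of weight two in the scalar field, so I_E^n is (up to an additive integration constant) invariant under the conformal–almost-geodesic frame transformations. -/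

import Mathlib

/-- Transformation rule (t1) for the non-minimal coupling coefficient `A`:
`Ā(f x) = exp(−(n−2)·γ₁ x)·A x`. -/
noncomputable def transA (n : ℕ) (f : ℝ ≃ ℝ) (γ₁ A : ℝ → ℝ) : ℝ → ℝ :=
  fun y => Real.exp (-((n : ℝ) - 2) * γ₁ (f.symm y)) * A (f.symm y)

/-- Transformation rule (t3) for the coefficient `C₁`:
`C̄₁(f x)·f' x = exp(−(n−2)·γ₁ x)·(C₁ x + A x·((n−1)/2·γ₂' x + (n−3)/2·γ₃' x))`. -/
noncomputable def transC1 (n : ℕ) (f : ℝ ≃ ℝ) (γ₁ γ₂ γ₃ A C₁ : ℝ → ℝ) : ℝ → ℝ :=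
  fun y => Real.exp (-((n : ℝ) - 2) * γ₁ (f.symm y)) *
    (C₁ (f.symm y) + A (f.symm y) *
      (((n : ℝ) - 1) / 2 * deriv γ₂ (f.symm y) + ((n : ℝ) - 3) / 2 * deriv γ₃ (f.symm y)))
    / deriv (⇑f) (f.symm y)

/-- Transformation rule (t4) for the coefficient `C₂`:
`C̄₂(f x)·f' x = exp(−(n−2)·γ₁ x)·(C₂ x + A x·((n−1)·γ₂' x − γ₃' x))`. -/
noncomputable def transC2 (n : ℕ) (f : ℝ ≃ ℝ) (γ₁ γ₂ γ₃ A C₂ : ℝ → ℝ) : ℝ → ℝ :=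
  fun y => Real.exp (-((n : ℝ) - 2) * γ₁ (f.symm y)) *
    (C₂ (f.symm y) + A (f.symm y) *
      (((n : ℝ) - 1) * deriv γ₂ (f.symm y) - deriv γ₃ (f.symm y)))
    / deriv (⇑f) (f.symm y)

/-- Transformation rule (t2) for the kinetic coupling `B`:
`B̄(f x)·(f' x)² = exp(−(n−2)·γ₁ x)·( B x
  + (n−1)·( n·A·γ₂'·γ₃' − A·(γ₂')² − A·(γ₃')² + A'·(γ₂' + γ₃') − (n−2)·A·γ₁'·(γ₂' + γ₃') )
  + C₁·( −2n·γ₁' + 2(n+1)·γ₂' − 2·γ₃' ) + C₂·( 2·γ₁' − (n+3)·γ₂' + (n+1)·γ₃' ) )`. -/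
noncomputable def transB (n : ℕ) (f : ℝ ≃ ℝ) (γ₁ γ₂ γ₃ A B C₁ C₂ : ℝ → ℝ) : ℝ → ℝ :=
  fun y =>
    Real.exp (-((n : ℝ) - 2) * γ₁ (f.symm y)) *
      (B (f.symm y)
        + ((n : ℝ) - 1) *
          ((n : ℝ) * A (f.symm y) * deriv γ₂ (f.symm y) * deriv γ₃ (f.symm y)
            - A (f.symm y) * (deriv γ₂ (f.symm y)) ^ 2
            - A (f.symm y) * (deriv γ₃ (f.symm y)) ^ 2
            + deriv A (f.symm y) * (deriv γ₂ (f.symm y) + deriv γ₃ (f.symm y))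
            - ((n : ℝ) - 2) * A (f.symm y) * deriv γ₁ (f.symm y)
              * (deriv γ₂ (f.symm y) + deriv γ₃ (f.symm y)))
        + C₁ (f.symm y) * (-(2 * (n : ℝ)) * deriv γ₁ (f.symm y)
            + 2 * ((n : ℝ) + 1) * deriv γ₂ (f.symm y) - 2 * deriv γ₃ (f.symm y))
        + C₂ (f.symm y) * (2 * deriv γ₁ (f.symm y)
            - ((n : ℝ) + 3) * deriv γ₂ (f.symm y) + ((n : ℝ) + 1) * deriv γ₃ (f.symm y)))
      / (deriv (⇑f) (f.symm y)) ^ 2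

/-- The square `W` of the integrand of the integral invariant `I_E^n` (eq. (i3)):
`W = ((n−2)·A·B + 2·A'·(C₂ − n·C₁))/((n−2)·A²)
   + ((n²−5)·C₂² − 4·C₁² + 2·(4 + n − n²)·C₁·C₂)/((n−2)·(n−1)·A²)`. -/
noncomputable def Wsq (n : ℕ) (A B C₁ C₂ : ℝ → ℝ) (x : ℝ) : ℝ :=
  (((n : ℝ) - 2) * A x * B x + 2 * deriv A x * (C₂ x - (n : ℝ) * C₁ x))
      / (((n : ℝ) - 2) * (A x) ^ 2)
    + (((n : ℝ) ^ 2 - 5) * (C₂ x) ^ 2 - 4 * (C₁ x) ^ 2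
        + 2 * (4 + (n : ℝ) - (n : ℝ) ^ 2) * C₁ x * C₂ x)
      / (((n : ℝ) - 2) * ((n : ℝ) - 1) * (A x) ^ 2)

/-!
The transformation factors through two simpler ones. At a fixed value of the scalar field the
coefficients undergo a gauge transformation `A ↦ e·A`, `Cᵢ ↦ e·(Cᵢ + A·(…))`,
`B ↦ e·(B + …)` with `e = exp(−(n−2)·γ₁)`, under which `W` is invariant: the `γ₁'`-term that `e`
contributes to `A'` is compensated by the `γ₁'`-terms of `B̄`, and the `γ₂'`, `γ₃'`-terms cancel. The change of variable `f` then divides `B` by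
`f'²`, the `Cᵢ` and `A'` by `f'`, and leaves `A` alone, so every term of `W` picks up `f'⁻²`.
-/

theorem deriv_symm_mul_deriv (e : ℝ ≃ ℝ) {x : ℝ} (he : DifferentiableAt ℝ e x)
    (hesymm : DifferentiableAt ℝ e.symm (e x)) :
    deriv e.symm (e x) * deriv e x = 1 := by
  rw [← deriv_comp x hesymm he, Equiv.symm_comp_self, deriv_id]

theorem deriv_ne_zero_of_differentiableAt_symm (e : ℝ ≃ ℝ) {x : ℝ}
    (he : DifferentiableAt ℝ e x) (hesymm : DifferentiableAt ℝ e.symm (e x)) :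
    deriv e x ≠ 0 :=
  right_ne_zero_of_mul_eq_one (deriv_symm_mul_deriv e he hesymm)

theorem deriv_comp_symm (e : ℝ ≃ ℝ) {g : ℝ → ℝ} {x : ℝ} (hg : DifferentiableAt ℝ g x)
    (he : DifferentiableAt ℝ e x) (hesymm : DifferentiableAt ℝ e.symm (e x)) :
    deriv (g ∘ e.symm) (e x) = deriv g x / deriv e x := by
  have hg' : DifferentiableAt ℝ g (e.symm (e x)) := by rwa [e.symm_apply_apply]
  rw [deriv_comp _ hg' hesymm, e.symm_apply_apply,
    eq_div_iff (deriv_ne_zero_of_differentiableAt_symm e he hesymm), mul_assoc,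
    deriv_symm_mul_deriv e he hesymm, mul_one]

theorem Wsq_reparam (n : ℕ) (e : ℝ ≃ ℝ) (A B C₁ C₂ : ℝ → ℝ) {x : ℝ}
    (he : DifferentiableAt ℝ e x) (hesymm : DifferentiableAt ℝ e.symm (e x))
    (hA : DifferentiableAt ℝ A x) :
    Wsq n (A ∘ e.symm) (fun y => B (e.symm y) / deriv e (e.symm y) ^ 2)
        (fun y => C₁ (e.symm y) / deriv e (e.symm y))
        (fun y => C₂ (e.symm y) / deriv e (e.symm y)) (e x) * deriv e x ^ 2
      = Wsq n A B C₁ C₂ x := by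
  have hd := deriv_ne_zero_of_differentiableAt_symm e he hesymm
  unfold Wsq
  rw [deriv_comp_symm e hA he hesymm]
  simp only [Function.comp_apply, e.symm_apply_apply]
  field_simp

theorem Wsq_gauge {n : ℕ} (hn₁ : n ≠ 1) (hn₂ : n ≠ 2) (γ₁ γ₂ γ₃ A B C₁ C₂ : ℝ → ℝ) {x : ℝ}
    (hγ₁ : DifferentiableAt ℝ γ₁ x) (hA : DifferentiableAt ℝ A x) (hA0 : A x ≠ 0) :
    Wsq n (transA n (Equiv.refl ℝ) γ₁ A) (transB n (Equiv.refl ℝ) γ₁ γ₂ γ₃ A B C₁ C₂)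
        (transC1 n (Equiv.refl ℝ) γ₁ γ₂ γ₃ A C₁) (transC2 n (Equiv.refl ℝ) γ₁ γ₂ γ₃ A C₂) x
      = Wsq n A B C₁ C₂ x := by
  have hn₁' : (n : ℝ) - 1 ≠ 0 := sub_ne_zero.2 (mod_cast hn₁)
  have hn₂' : (n : ℝ) - 2 ≠ 0 := sub_ne_zero.2 (mod_cast hn₂)
  have hderiv : deriv (transA n (Equiv.refl ℝ) γ₁ A) x
      = Real.exp (-((n : ℝ) - 2) * γ₁ x) * (deriv A x - ((n : ℝ) - 2) * deriv γ₁ x * A x) := by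
    change deriv (fun t => Real.exp (-((n : ℝ) - 2) * γ₁ t) * A t) x = _
    rw [deriv_fun_mul ((hγ₁.const_mul _).exp) hA, deriv_exp (hγ₁.const_mul _),
      deriv_const_mul _ hγ₁]
    ring
  unfold Wsq
  rw [hderiv]
  simp only [transA, transB, transC1, transC2, Equiv.refl_symm, Equiv.coe_refl, deriv_id,
    id, div_one]
  field_simp
  ring

theorem transB_eq_reparam (n : ℕ) (f : ℝ ≃ ℝ) (γ₁ γ₂ γ₃ A B C₁ C₂ : ℝ → ℝ) :
    transB n f γ₁ γ₂ γ₃ A B C₁ C₂ = fun y =>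
      transB n (Equiv.refl ℝ) γ₁ γ₂ γ₃ A B C₁ C₂ (f.symm y) / deriv f (f.symm y) ^ 2 := by
  funext y
  simp [transB]

theorem transC1_eq_reparam (n : ℕ) (f : ℝ ≃ ℝ) (γ₁ γ₂ γ₃ A C₁ : ℝ → ℝ) :
    transC1 n f γ₁ γ₂ γ₃ A C₁ = fun y =>
      transC1 n (Equiv.refl ℝ) γ₁ γ₂ γ₃ A C₁ (f.symm y) / deriv f (f.symm y) := by
  funext y
  simp [transC1]

theorem transC2_eq_reparam (n : ℕ) (f : ℝ ≃ ℝ) (γ₁ γ₂ γ₃ A C₂ : ℝ → ℝ) :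
    transC2 n f γ₁ γ₂ γ₃ A C₂ = fun y =>
      transC2 n (Equiv.refl ℝ) γ₁ γ₂ γ₃ A C₂ (f.symm y) / deriv f (f.symm y) := by
  funext y
  simp [transC2]

theorem Wsq_weight_two_general (n : ℕ) (hn : 3 ≤ n)
    (f : ℝ ≃ ℝ) (γ₁ γ₂ γ₃ : ℝ → ℝ)
    (hf : Differentiable ℝ ⇑f)
    (hfsymm : Differentiable ℝ ⇑f.symm)
    (hγ₁ : Differentiable ℝ γ₁)
    (A B C₁ C₂ : ℝ → ℝ) (hA : Differentiable ℝ A) (hA0 : ∀ x, A x ≠ 0) :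
    ∀ x, Wsq n (transA n f γ₁ A) (transB n f γ₁ γ₂ γ₃ A B C₁ C₂)
          (transC1 n f γ₁ γ₂ γ₃ A C₁) (transC2 n f γ₁ γ₂ γ₃ A C₂) (f x)
        * (deriv (⇑f) x) ^ 2
      = Wsq n A B C₁ C₂ x := by
  intro x
  have hgauge : DifferentiableAt ℝ (transA n (Equiv.refl ℝ) γ₁ A) x :=
    (((hγ₁ x).const_mul _).exp).mul (hA x)
  rw [show transA n f γ₁ A = transA n (Equiv.refl ℝ) γ₁ A ∘ f.symm from rfl,
    transB_eq_reparam, transC1_eq_reparam, transC2_eq_reparam,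
    Wsq_reparam n f _ _ _ _ (hf x) (hfsymm _) hgauge]
  exact Wsq_gauge (by omega) (by omega) γ₁ γ₂ γ₃ A B C₁ C₂ (hγ₁ x) (hA x) (hA0 x)

/-- The quantity `W` under the square root in the integral invariant
`I_E^n = ∫√(±W) dΦ` transforms as a density of weight two in the scalar field:
`W̄(f x)·(f' x)² = W(x)` for all `x`, where `W̄` is formed from the transformed
coefficients `(Ā, B̄, C̄₁, C̄₂)`. Hence `I_E^n` is (up to an additive integration
constant) invariant under the conformal–almost-geodesic frame transformations. -/
theorem Wsq_weight_two (n : ℕ) (hn : 3 ≤ n)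
    (f : ℝ ≃ ℝ) (γ₁ γ₂ γ₃ : ℝ → ℝ)
    (hf : Differentiable ℝ ⇑f) (hf' : ∀ x, deriv (⇑f) x ≠ 0)
    (hfsymm : Differentiable ℝ ⇑f.symm)
    (hγ₁ : Differentiable ℝ γ₁) (hγ₂ : Differentiable ℝ γ₂) (hγ₃ : Differentiable ℝ γ₃)
    (A B C₁ C₂ : ℝ → ℝ) (hA : Differentiable ℝ A) (hA0 : ∀ x, A x ≠ 0) :
    ∀ x, Wsq n (transA n f γ₁ A) (transB n f γ₁ γ₂ γ₃ A B C₁ C₂)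
          (transC1 n f γ₁ γ₂ γ₃ A C₁) (transC2 n f γ₁ γ₂ γ₃ A C₂) (f x)
        * (deriv (⇑f) x) ^ 2
      = Wsq n A B C₁ C₂ x :=
  Wsq_weight_two_general n hn f γ₁ γ₂ γ₃ hf hfsymm hγ₁ A B C₁ C₂ hA hA0
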